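/- arXiv:1907.04712 — 5 statements merged into one kernel-verified Lean document; each statement's English description precedes it below -/
import Mathlib

section
/- Let X = (Π, V) be an exchangeable random variable with values in M★∞, and let (U_k)_{k≥1} be an i.i.d. sequence of uniform random variables on [0,1], independent of X. For i ∈ ℕ, let k(Π, i) denote the label of the block of Π containing i (blocks labelled in increasing order of their least elements), and set Z_i = (U_{k(Π,i)}, V_i) ∈ [0,1] × [0,∞). Then the sequence (Z_i)_{i≥1} is exchangeable: for every finitely supported permutation σ of ℕ, (Z_{σ(i)})_{i≥1} has the same law as (Z_i)_{i≥1}. -/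
open MeasureTheory ProbabilityTheory Filter Topology

/-- A marked partition of `ℕ`: an equivalence relation together with a mark function
that is constant on each block. -/
structure MarkedPartition where
  rel : ℕ → ℕ → Prop
  refl : ∀ i, rel i i
  symm : ∀ {i j}, rel i j → rel j i
  trans : ∀ {i j k}, rel i j → rel j k → rel i k
  v : ℕ → ℝ
  consistent : ∀ {i j}, rel i j → v i = v j

namespace MarkedPartition

/-- The σ-algebra on marked partitions, generated by the maps `x ↦ x.rel i j` and `x ↦ x.v i`. -/
instance : MeasurableSpace MarkedPartition :=
  (⨆ (i : ℕ) (j : ℕ), MeasurableSpace.comap (fun x : MarkedPartition => x.rel i j) ⊤) ⊔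
    (⨆ i : ℕ, MeasurableSpace.comap (fun x : MarkedPartition => x.v i) (inferInstance))

/-- Action of a permutation of `ℕ` on marked partitions. -/
def perm (σ : Equiv.Perm ℕ) (x : MarkedPartition) : MarkedPartition where
  rel i j := x.rel (σ i) (σ j)
  refl i := x.refl _
  symm h := x.symm h
  trans h h' := x.trans h h'
  v i := x.v (σ i)
  consistent h := x.consistent h

/-- The block containing `i`. -/
def block (x : MarkedPartition) (i : ℕ) : Set ℕ := {j | x.rel i j}

/-- Non-degenerate: every finite block has mark `0`. -/
def NonDegenerate (x : MarkedPartition) : Prop := ∀ i, (x.block i).Finite → x.v i = 0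

/-- Least element of the block containing `i`. -/
noncomputable def leastOf (x : MarkedPartition) (i : ℕ) : ℕ := sInf (x.block i)

open Classical in
/-- The label of the block of `x` containing `i`, blocks being labelled in increasing
order of their least elements (labels start at `1`). -/
noncomputable def label (x : MarkedPartition) (i : ℕ) : ℕ :=
  ((Finset.range (x.leastOf i + 1)).filter (fun m => x.leastOf m = m)).card

end MarkedPartition

/-- A permutation is finitely supported. -/
def FinSupp (σ : Equiv.Perm ℕ) : Prop := {n | σ n ≠ n}.Finite

/-- Lexicographic order on pairs `(s, v)`. -/
def lexLe (a b : ℝ × ℝ) : Prop := a.1 < b.1 ∨ (a.1 = b.1 ∧ a.2 ≤ b.2)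

/-- Membership in the space `Z↓`. -/
def MemZdown (z : ℕ → ℝ × ℝ) : Prop :=
  (∀ k, (z k).1 ∈ Set.Icc (0:ℝ) 1 ∧ 0 ≤ (z k).2) ∧
  (∀ k, lexLe (z (k + 1)) (z k)) ∧
  (∀ n, ∑ k ∈ Finset.range n, (z k).1 ≤ 1) ∧
  (∀ k, (z k).1 = 0 → (z k).2 = 0)

/-- `t_n = s_1 + … + s_n`. -/
def cumSum (z : ℕ → ℝ × ℝ) (n : ℕ) : ℝ := ∑ k ∈ Finset.range n, (z k).1

open Classical in
/-- Index of the paintbox interval containing `u`, if any. -/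
noncomputable def pbIdx (z : ℕ → ℝ × ℝ) (u : ℝ) : Option ℕ :=
  if h : ∃ n, cumSum z n ≤ u ∧ u < cumSum z (n + 1) then some (Nat.find h) else none

/-- The paintbox marked partition built from `z` and the sequence `u` of uniform samples. -/
noncomputable def paintbox (z : ℕ → ℝ × ℝ) (u : ℕ → ℝ) : MarkedPartition where
  rel i j := i = j ∨ ((pbIdx z (u i)).isSome ∧ pbIdx z (u i) = pbIdx z (u j))
  refl _ := Or.inl rfl
  symm h := by
    rcases h with h | ⟨hs, he⟩
    · exact Or.inl h.symm
    · exact Or.inr ⟨he ▸ hs, he.symm⟩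
  trans h h' := by
    rcases h with rfl | ⟨hs, he⟩
    · exact h'
    · rcases h' with rfl | ⟨hs', he'⟩
      · exact Or.inr ⟨hs, he⟩
      · exact Or.inr ⟨hs, he.trans he'⟩
  v i := (pbIdx z (u i)).elim 0 (fun n => (z n).2)
  consistent h := by
    rcases h with rfl | ⟨hs, he⟩
    · rfl
    · simp only [he]

/-- The uniform distribution on `[0,1]`. -/
noncomputable def uniform01 : Measure ℝ := volume.restrict (Set.Icc 0 1)

/-- `U` is an i.i.d. sequence of uniform random variables on `[0,1]` under `μ`. -/
def IsIIDUniform {Θ : Type*} [MeasurableSpace Θ] (μ : Measure Θ) (U : ℕ → Θ → ℝ) : Prop :=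
  (∀ n, Measurable (U n)) ∧ iIndepFun U μ ∧
    ∀ n, μ.map (U n) = uniform01

/-- The paintbox measure `ρ_z`, the law of the paintbox construction driven by the
i.i.d. uniform sequence `U` defined on `(Θ, μ)`. -/
noncomputable def paintboxLaw {Θ : Type*} [MeasurableSpace Θ] (μ : Measure Θ)
    (U : ℕ → Θ → ℝ) (z : ℕ → ℝ × ℝ) : Measure MarkedPartition :=
  μ.map (fun θ => paintbox z (fun n => U n θ))

open Classical in
/-- `#(B ∩ [n]) / n`. -/
noncomputable def freqAvg (B : Set ℕ) (n : ℕ) : ℝ :=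
  (((Finset.range n).filter (fun j => j ∈ B)).card : ℝ) / n

/-- `B` has an asymptotic frequency. -/
def HasFreq (B : Set ℕ) : Prop := ∃ l : ℝ, Tendsto (freqAvg B) atTop (𝓝 l)

/-- The asymptotic frequency of `B` (junk value if the limit does not exist). -/
noncomputable def freq (B : Set ℕ) : ℝ := limUnder atTop (freqAvg B)

/-- `x` has asymptotic frequencies. -/
def MarkedPartition.HasFreqs (x : MarkedPartition) : Prop := ∀ i, HasFreq (x.block i)

/-- The set of least representatives of infinite blocks of `x` with positive asymptotic
frequency. -/
def MarkedPartition.posReps (x : MarkedPartition) : Set ℕ :=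
  {r | x.leastOf r = r ∧ (x.block r).Infinite ∧ 0 < freq (x.block r)}

/-- `g` is the `⪯`-nonincreasing enumeration `|x|↓` of the pairs
(asymptotic frequency, mark) over the infinite blocks of `x` with positive frequency,
completed by `(0,0)` terms. -/
def IsRankedFreqs (x : MarkedPartition) (g : ℕ → ℝ × ℝ) : Prop :=
  (∀ k, lexLe (g (k + 1)) (g k)) ∧
  ∃ e : ℕ → ℕ, Set.BijOn e {k | g k ≠ (0, 0)} x.posReps ∧
    ∀ k, g k ≠ (0, 0) → g k = (freq (x.block (e k)), x.v (e k))

/-!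
Let `μ` be the law of `X` and `λ` the uniform law on `[0,1]`; by independence, `(X, (U_k)_k)` has
law `μ ⊗ λ^ℕ`. This law is invariant under permuting the partition (exchangeability of `X`) and
under precomposing the uniform sequence with an injection `ℕ → ℕ` depending measurably on the
partition (the `U_k` are i.i.d.). As the block of `X.perm σ` with label `k` is the `σ`-preimage of
a block of `X`, the sequence `(Z_{σ i})_i`, computed with `U_{2k}` in place of `U_k`, is the
`Z`-sequence of `(X.perm σ, (U_{relabel σ X k})_k)`; hence it has the law of `(Z_i)_i`.
-/

namespace MarkedPartition

section Measurability

variable {α : Type*} [MeasurableSpace α]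

lemma measurable_rel (i j : ℕ) : Measurable fun x : MarkedPartition => x.rel i j :=
  measurable_iff_comap_le.2 <| (le_iSup₂ (f := fun i j : ℕ =>
    MeasurableSpace.comap (fun x : MarkedPartition => x.rel i j) ⊤) i j).trans le_sup_left

lemma measurable_v (i : ℕ) : Measurable fun x : MarkedPartition => x.v i :=
  measurable_iff_comap_le.2 <| (le_iSup (f := fun i : ℕ =>
    MeasurableSpace.comap (fun x : MarkedPartition => x.v i) inferInstance) i).trans
      le_sup_right

lemma measurable_of_rel_of_v {f : α → MarkedPartition}
    (hrel : ∀ i j, Measurable fun a => (f a).rel i j) (hv : ∀ i, Measurable fun a => (f a).v i) :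
    Measurable f := by
  refine measurable_iff_le_map.2 (sup_le (iSup₂_le fun i j => ?_) (iSup_le fun i => ?_)) <;>
    refine MeasurableSpace.comap_le_iff_le_map.1 ?_ <;> rw [MeasurableSpace.comap_comp]
  · exact (hrel i j).comap_le
  · exact (hv i).comap_le

lemma measurable_perm (σ : Equiv.Perm ℕ) : Measurable (perm σ) :=
  measurable_of_rel_of_v (fun i j => measurable_rel (σ i) (σ j)) fun i => measurable_v (σ i)

end Measurability

section Labels

variable (x : MarkedPartition)

lemma rel_leastOf (i : ℕ) : x.rel i (x.leastOf i) :=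
  Nat.sInf_mem (⟨i, x.refl i⟩ : (x.block i).Nonempty)

variable {x}

lemma not_rel_of_lt_leastOf {i m : ℕ} (h : m < x.leastOf i) : ¬ x.rel i m :=
  Nat.notMem_of_lt_sInf h

lemma leastOf_eq_iff {i n : ℕ} : x.leastOf i = n ↔ x.rel i n ∧ ∀ m < n, ¬ x.rel i m := by
  refine ⟨fun h => h ▸ ⟨x.rel_leastOf i, fun m hm => not_rel_of_lt_leastOf hm⟩,
    fun ⟨hn, hlt⟩ => ?_⟩
  rcases lt_trichotomy (x.leastOf i) n with h | h | h
  · exact absurd (x.rel_leastOf i) (hlt _ h)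
  · exact h
  · exact absurd hn (not_rel_of_lt_leastOf h)

lemma leastOf_eq_of_rel {i j : ℕ} (h : x.rel i j) : x.leastOf i = x.leastOf j := by
  have : x.block i = x.block j := Set.ext fun m => ⟨x.trans (x.symm h), x.trans h⟩
  rw [leastOf, leastOf, this]

variable (x)

lemma leastOf_leastOf (i : ℕ) : x.leastOf (x.leastOf i) = x.leastOf i :=
  (leastOf_eq_of_rel (x.rel_leastOf i)).symm

open Classical in
lemma label_eq_count (i : ℕ) :
    x.label i = Nat.count (fun m => x.leastOf m = m) (x.leastOf i + 1) := by
  rw [Nat.count_eq_card_filter_range, label]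

variable {x}

lemma label_eq_of_rel {i j : ℕ} (h : x.rel i j) : x.label i = x.label j := by
  rw [label, label, leastOf_eq_of_rel h]

open Classical in
lemma label_lt_label {i j : ℕ} (h : x.leastOf i < x.leastOf j) : x.label i < x.label j := by
  rw [label_eq_count, label_eq_count]
  calc Nat.count (fun m => x.leastOf m = m) (x.leastOf i + 1)
      ≤ Nat.count (fun m => x.leastOf m = m) (x.leastOf j) := Nat.count_monotone _ h
    _ < Nat.count (fun m => x.leastOf m = m) (x.leastOf j + 1) :=
        Nat.count_lt_count_succ_iff.2 (x.leastOf_leastOf j)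

lemma label_eq_label_iff {i j : ℕ} : x.label i = x.label j ↔ x.rel i j := by
  refine ⟨fun h => ?_, label_eq_of_rel⟩
  have hleast : x.leastOf i = x.leastOf j := by
    rcases lt_trichotomy (x.leastOf i) (x.leastOf j) with hlt | heq | hlt
    · exact absurd h (label_lt_label hlt).ne
    · exact heq
    · exact absurd h (label_lt_label hlt).ne'
  exact x.trans (x.rel_leastOf i) (hleast ▸ x.symm (x.rel_leastOf j))

lemma measurable_leastOf (i : ℕ) : Measurable fun x : MarkedPartition => x.leastOf i := by
  refine measurable_to_countable' fun n => ?_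
  simp only [Set.preimage, Set.mem_singleton_iff, leastOf_eq_iff]
  exact measurableSet_setOfPred.2 <| (measurable_rel i n).and <|
    Measurable.forall fun m => Measurable.forall fun _ => (measurable_rel i m).not

open Classical in
lemma measurable_label (i : ℕ) : Measurable fun x : MarkedPartition => x.label i := by
  have hcount : ∀ n, Measurable fun x : MarkedPartition =>
      ((Finset.range (n + 1)).filter (fun m => x.leastOf m = m)).card := fun n => by
    simp only [Finset.card_filter]
    exact Finset.measurable_sum _ fun m _ =>
      Measurable.ite ((measurable_leastOf m) (measurableSet_singleton m)) measurable_const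
        measurable_const
  exact (measurable_from_prod_countable_left (f := fun p : MarkedPartition × ℕ =>
    ((Finset.range (p.2 + 1)).filter (fun m => p.1.leastOf m = m)).card) hcount).comp
    (measurable_id.prodMk (measurable_leastOf i))

end Labels

/-- Sending labels of `x.perm σ` to even numbers and all other indices to odd ones makes
`relabel σ x` injective without comparing the label ranges of `x` and `x.perm σ`. -/
noncomputable def relabel (σ : Equiv.Perm ℕ) (x : MarkedPartition) (k : ℕ) : ℕ :=
  open Classical in
  if k ∈ Set.range (x.perm σ).label then
    2 * x.label (σ (Function.invFun (x.perm σ).label k))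
  else 2 * k + 1

section Relabel

variable (σ : Equiv.Perm ℕ) (x : MarkedPartition)

lemma relabel_label (i : ℕ) : relabel σ x ((x.perm σ).label i) = 2 * x.label (σ i) := by
  rw [relabel, if_pos ⟨i, rfl⟩, label_eq_label_iff.2]
  exact (label_eq_label_iff (x := x.perm σ)).1 (Function.invFun_eq ⟨i, rfl⟩)

lemma relabel_injective : Function.Injective (relabel σ x) := by
  intro k k' h
  by_cases hk : k ∈ Set.range (x.perm σ).label <;>
    by_cases hk' : k' ∈ Set.range (x.perm σ).label
  · obtain ⟨i, rfl⟩ := hk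
    obtain ⟨j, rfl⟩ := hk'
    rw [relabel_label, relabel_label, Nat.mul_left_cancel_iff two_pos] at h
    exact label_eq_label_iff.2 (label_eq_label_iff.1 h : x.rel (σ i) (σ j))
  all_goals simp only [relabel, if_pos, if_neg, hk, hk', not_false_eq_true] at h; omega

lemma relabel_eq_iff (k n : ℕ) : relabel σ x k = n ↔
    (∃ i, (x.perm σ).label i = k ∧ 2 * x.label (σ i) = n) ∨
      ((∀ i, (x.perm σ).label i ≠ k) ∧ 2 * k + 1 = n) := by
  refine ⟨fun h => ?_, ?_⟩
  · by_cases hk : k ∈ Set.range (x.perm σ).label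
    · obtain ⟨i, rfl⟩ := hk
      exact Or.inl ⟨i, rfl, relabel_label σ x i ▸ h⟩
    · rw [relabel, if_neg hk] at h
      exact Or.inr ⟨fun i hi => hk ⟨i, hi⟩, h⟩
  · rintro (⟨i, rfl, h⟩ | ⟨hk, h⟩)
    · rwa [relabel_label]
    · rwa [relabel, if_neg fun ⟨i, hi⟩ => hk i hi]

lemma measurable_relabel (k : ℕ) : Measurable fun x : MarkedPartition => relabel σ x k := by
  have hlabel : ∀ i m, Measurable fun x : MarkedPartition => (x.perm σ).label i = m :=
    fun i m => measurableSet_setOfPred.1 <|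
      ((measurable_label i).comp (measurable_perm σ)) (measurableSet_singleton m)
  refine measurable_to_countable' fun n => ?_
  simp only [Set.preimage, Set.mem_singleton_iff, relabel_eq_iff]
  refine measurableSet_setOfPred.2 <| (Measurable.exists fun i => (hlabel i k).and ?_).or
    ((Measurable.forall fun i => (hlabel i k).not).and measurable_const)
  exact measurableSet_setOfPred.1 <|
    (measurable_const.mul (measurable_label (σ i))) (measurableSet_singleton n)

end Relabel

end MarkedPartition

instance : IsProbabilityMeasure uniform01 :=
  ⟨by simp [uniform01]⟩

lemma MeasureTheory.Measure.infinitePi_map_comp_of_injective {ι κ X : Type*}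
    [MeasurableSpace X] (μ : ι → Measure X) [∀ i, IsProbabilityMeasure (μ i)] {τ : κ → ι}
    (hτ : Function.Injective τ) :
    (Measure.infinitePi μ).map (fun u => u ∘ τ) = Measure.infinitePi fun k => μ (τ k) := by
  classical
  refine eq_infinitePi _ fun s t ht => ?_
  set t' : ι → Set X := Function.extend τ t fun _ => Set.univ
  have ht' : ∀ k, t' (τ k) = t k := fun k => hτ.extend_apply t _ k
  have hpre : (fun u : ι → X => u ∘ τ) ⁻¹' (s : Set κ).pi t =
      ((s.image τ : Finset ι) : Set ι).pi t' := by
    ext u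
    simp [ht']
  rw [Measure.map_apply (by fun_prop) (.pi s.countable_toSet fun k _ => ht k), hpre,
    infinitePi_pi _ fun i hi => ?_, Finset.prod_image fun a _ b _ h => hτ h]
  · simp only [ht']
  · obtain ⟨k, -, rfl⟩ := Finset.mem_image.1 hi
    exact ht' k ▸ ht k

section Reindexing

variable {α : Type*} [MeasurableSpace α] {ι κ β : Type*} [Countable ι] [MeasurableSpace ι]
  [MeasurableSingletonClass ι] [MeasurableSpace β]

lemma measurable_comp_of_countable {ρ : α → κ → ι} (hρ : ∀ k, Measurable fun a => ρ a k) :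
    Measurable fun p : α × (ι → β) => p.2 ∘ ρ p.1 := by
  have heval : Measurable fun q : (ι → β) × ι => q.1 q.2 :=
    measurable_from_prod_countable_left fun i => measurable_pi_apply i
  exact measurable_pi_lambda _ fun k =>
    heval.comp (measurable_snd.prodMk ((hρ k).comp measurable_fst))

lemma measurePreserving_prod_comp_of_injective (μ : Measure α) [SFinite μ]
    (ν : Measure β) [IsProbabilityMeasure ν] {ρ : α → κ → ι}
    (hρm : ∀ k, Measurable fun a => ρ a k) (hρ : ∀ a, Function.Injective (ρ a)) :
    MeasurePreserving (fun p : α × (ι → β) => (p.1, p.2 ∘ ρ p.1))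
      (μ.prod (Measure.infinitePi fun _ : ι => ν)) (μ.prod (Measure.infinitePi fun _ : κ => ν)) :=
  (MeasurePreserving.id μ).skew_product (g := fun a u => u ∘ ρ a)
    (measurable_comp_of_countable hρm) <|
    ae_of_all _ fun a => Measure.infinitePi_map_comp_of_injective (fun _ => ν) (hρ a)

end Reindexing

section IIDUniform

variable {Ω α : Type*} [MeasurableSpace Ω] [MeasurableSpace α] {P : Measure Ω}
  {U : ℕ → Ω → ℝ}

lemma IsIIDUniform.map_eq_infinitePi (hU : IsIIDUniform P U) :
    P.map (fun ω k => U k ω) = Measure.infinitePi fun _ => uniform01 := by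
  rw [hU.2.1.map_fun_eq_infinitePi_map hU.1]
  simp only [hU.2.2]

lemma IsIIDUniform.map_prod_eq_prod (hU : IsIIDUniform P U) {X : Ω → α} (hX : Measurable X)
    (hindep : IndepFun (fun ω k => U k ω) X P) :
    P.map (fun ω => (X ω, fun k => U k ω)) =
      (P.map X).prod (Measure.infinitePi fun _ => uniform01) := by
  have := hU.2.1.isProbabilityMeasure
  rw [← hU.map_eq_infinitePi]
  exact (indepFun_iff_map_prod_eq_prod_map_map hX.aemeasurable
    (measurable_pi_lambda _ hU.1).aemeasurable).1 hindep.symm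

end IIDUniform

theorem Z_sequence_exchangeable_general
    {Ω : Type} [MeasurableSpace Ω] (P : Measure Ω)
    (X : Ω → MarkedPartition) (hXm : Measurable X)
    (hexch : ∀ σ : Equiv.Perm ℕ, FinSupp σ →
      P.map (fun ω => (X ω).perm σ) = P.map X)
    (U : ℕ → Ω → ℝ) (hU : IsIIDUniform P U)
    (hindep : IndepFun (fun ω (n : ℕ) => U n ω) X P) :
    ∀ σ : Equiv.Perm ℕ, FinSupp σ →
      P.map (fun ω (i : ℕ) => (U ((X ω).label (σ i)) ω, (X ω).v (σ i))) =
        P.map (fun ω (i : ℕ) => (U ((X ω).label i) ω, (X ω).v i)) := by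
  intro σ hσ
  have := hU.2.1.isProbabilityMeasure
  let Z : MarkedPartition × (ℕ → ℝ) → ℕ → ℝ × ℝ := fun p i => (p.2 (p.1.label i), p.1.v i)
  have hZ : Measurable Z := measurable_pi_lambda _ fun i =>
    ((measurable_pi_apply i).comp
      (measurable_comp_of_countable MarkedPartition.measurable_label)).prodMk
      ((MarkedPartition.measurable_v i).comp measurable_fst)
  have hW : Measurable fun ω => (X ω, fun k => U k ω) := hXm.prodMk (measurable_pi_lambda _ hU.1)
  have hdouble := measurePreserving_prod_comp_of_injective (P.map X) uniform01
    (ρ := fun _ k => 2 * k) (fun _ => measurable_const) fun _ => mul_right_injective₀ two_ne_zero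
  have hrelabel := measurePreserving_prod_comp_of_injective (P.map X) uniform01
    (MarkedPartition.measurable_relabel σ) (MarkedPartition.relabel_injective σ)
  have hpair := hU.map_prod_eq_prod hXm hindep
  set law := (P.map X).prod (Measure.infinitePi fun _ : ℕ => uniform01)
  have hperm : MeasurePreserving (Prod.map (MarkedPartition.perm σ) id) law law :=
    MeasurePreserving.prod ⟨MarkedPartition.measurable_perm σ, by
      rw [Measure.map_map (MarkedPartition.measurable_perm σ) hXm]; exact hexch σ hσ⟩
      (MeasurePreserving.id _)
  calc _ = law.map fun p => Z p ∘ σ := by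
        rw [← hpair, Measure.map_map (by fun_prop) hW]; rfl
    _ = law.map (Z ∘ Prod.map (MarkedPartition.perm σ) id ∘
          fun p => (p.1, p.2 ∘ MarkedPartition.relabel σ p.1)) := by
        conv_lhs => rw [← hdouble.map_eq]
        rw [Measure.map_map (by fun_prop) hdouble.measurable]
        congr 1
        funext p i
        simp only [Z, Function.comp_apply, Prod.map_fst, Prod.map_snd, id,
          MarkedPartition.relabel_label]
        rfl
    _ = law.map Z := by
        rw [← Measure.map_map hZ (hperm.measurable.comp hrelabel.measurable),
          ← Measure.map_map hperm.measurable hrelabel.measurable, hrelabel.map_eq, hperm.map_eq]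
    _ = _ := by rw [← hpair, Measure.map_map hZ hW]; rfl

/-- **Exchangeability of the sequence `Z_i = (U_{k(Π,i)}, V_i)`.**
If `X = (Π, V)` is an exchangeable random marked partition with values in `M★∞` and
`(U_k)` is an i.i.d. sequence of uniforms independent of `X`, then the sequence
`Z_i = (U_{k(Π,i)}, V_i)` is exchangeable. -/
theorem Z_sequence_exchangeable
    {Ω : Type} [MeasurableSpace Ω] (P : Measure Ω) [IsProbabilityMeasure P]
    (X : Ω → MarkedPartition) (hXm : Measurable X)
    (hval : ∀ ω, (∀ i, 0 ≤ (X ω).v i) ∧ (X ω).NonDegenerate)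
    (hexch : ∀ σ : Equiv.Perm ℕ, FinSupp σ →
      P.map (fun ω => (X ω).perm σ) = P.map X)
    (U : ℕ → Ω → ℝ) (hU : IsIIDUniform P U)
    (hindep : IndepFun (fun ω (n : ℕ) => U n ω) X P) :
    ∀ σ : Equiv.Perm ℕ, FinSupp σ →
      P.map (fun ω (i : ℕ) => (U ((X ω).label (σ i)) ω, (X ω).v (σ i))) =
        P.map (fun ω (i : ℕ) => (U ((X ω).label i) ω, (X ω).v i)) :=
  Z_sequence_exchangeable_general P X hXm hexch U hU hindep
end

section
/- The set Z↓₀ of sequences z = ((s_k, v_k))_{k≥1} in ([0,1] × [0,∞))^ℕ that are nonincreasing for the lexicographic order and satisfy Σ_k s_k ≤ 1 is a Gδ subset of the product space ([0,1] × [0,∞))^ℕ with the product topology; and Z↓ = {z ∈ Z↓₀ : v_k = 0 whenever s_k = 0} is also a Gδ subset of ([0,1] × [0,∞))^ℕ. Consequently Z↓, with the subspace topology, is a Polish space. -/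
/-- The ambient product space `([0,1] × [0,∞))^ℕ`. -/
abbrev ZSeq : Type := ℕ → ↥(Set.Icc (0:ℝ) 1) × ↥(Set.Ici (0:ℝ))

/-- Lexicographic order on `[0,1] × [0,∞)`. -/
def lexLe' (a b : ↥(Set.Icc (0:ℝ) 1) × ↥(Set.Ici (0:ℝ))) : Prop :=
  (a.1 : ℝ) < b.1 ∨ ((a.1 : ℝ) = b.1 ∧ (a.2 : ℝ) ≤ b.2)

/-- `Z↓₀`: lexicographically nonincreasing sequences with `Σ_k s_k ≤ 1`. -/
def Zdown0 : Set ZSeq :=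
  {z | (∀ k, lexLe' (z (k + 1)) (z k)) ∧ ∀ n, ∑ k ∈ Finset.range n, ((z k).1 : ℝ) ≤ 1}

/-- `Z↓`: elements of `Z↓₀` with `v_k = 0` whenever `s_k = 0`. -/
def Zdown : Set ZSeq :=
  {z | z ∈ Zdown0 ∧ ∀ k, ((z k).1 : ℝ) = 0 → ((z k).2 : ℝ) = 0}

/-! Each defining condition is a countable intersection of sets of the form "open ∪ closed", and
closed sets of a metrizable space are `Gδ`. A `Gδ` subset `⋂ n, U n` of a Polish
space is Polish, since it embeds as a closed subset of the Polish space `Π n, U n` via the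
diagonal map. -/

open Topology TopologicalSpace

theorem IsGδ.polishSpace {X : Type*} [TopologicalSpace X] [PolishSpace X] {s : Set X}
    (hs : IsGδ s) : PolishSpace s := by
  obtain ⟨U, hU, rfl⟩ := hs.eq_iInter_nat
  have : ∀ n, PolishSpace (U n) := fun n => (hU n).polishSpace
  let diag : (⋂ n, U n : Set X) → ∀ n, U n := fun x n => ⟨x, Set.mem_iInter.1 x.2 n⟩
  have hcont : Continuous diag := continuous_pi fun n => by fun_prop
  have hrange : Set.range diag = ⋂ n, {y | (y n : X) = y 0} := by
    ext y
    simp only [Set.mem_range, Set.mem_iInter, Set.mem_ofPred_eq]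
    refine ⟨?_, fun hy => ?_⟩
    · rintro ⟨x, rfl⟩ n
      rfl
    · refine ⟨⟨y 0, Set.mem_iInter.2 fun n => hy n ▸ (y n).2⟩, funext fun n => ?_⟩
      exact Subtype.ext (hy n).symm
  have hclosed : IsClosed (Set.range diag) := by
    rw [hrange]
    exact isClosed_iInter fun n => isClosed_eq (by fun_prop) (by fun_prop)
  have hemb : IsEmbedding diag :=
    .of_comp hcont (by fun_prop : Continuous fun y : ∀ n, U n => (y 0 : X)) .subtypeVal
  exact (IsClosedEmbedding.mk hemb hclosed).polishSpace

instance {α : Type*} [TopologicalSpace α] [PolishSpace α] [Preorder α] [OrderClosedTopology α]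
    (a b : α) : PolishSpace (Set.Icc a b) :=
  isClosed_Icc.polishSpace

instance {α : Type*} [TopologicalSpace α] [PolishSpace α] [Preorder α] [OrderClosedTopology α]
    (a : α) : PolishSpace (Set.Ici a) :=
  isClosed_Ici.polishSpace

section

variable {X : Type*} [TopologicalSpace X] [PseudoMetrizableSpace X]

theorem isGδ_setOf_lt_or_eq_and_le {Y : Type*} [TopologicalSpace Y] [LinearOrder Y]
    [OrderClosedTopology Y] {f g h k : X → Y} (hf : Continuous f) (hg : Continuous g)
    (hh : Continuous h) (hk : Continuous k) :
    IsGδ {x | f x < g x ∨ f x = g x ∧ h x ≤ k x} :=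
  (isOpen_lt hf hg).isGδ.union ((isClosed_eq hf hg).inter (isClosed_le hh hk)).isGδ

theorem isGδ_setOf_imp {p q : X → Prop} (hp : IsClosed {x | p x}) (hq : IsClosed {x | q x}) :
    IsGδ {x | p x → q x} := by
  have h : {x | p x → q x} = {x | p x}ᶜ ∪ {x | q x} := Set.ext fun _ => imp_iff_not_or
  exact h ▸ hp.isOpen_compl.isGδ.union hq.isGδ

end

theorem isGδ_setOf_lexAntitone : IsGδ {z : ZSeq | ∀ k, lexLe' (z (k + 1)) (z k)} := by
  rw [Set.ofPred_forall]
  exact .iInter fun k => isGδ_setOf_lt_or_eq_and_le (by fun_prop) (by fun_prop) (by fun_prop)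
    (by fun_prop)

theorem isClosed_setOf_sum_fst_le_one :
    IsClosed {z : ZSeq | ∀ n, ∑ k ∈ Finset.range n, ((z k).1 : ℝ) ≤ 1} := by
  rw [Set.ofPred_forall]
  exact isClosed_iInter fun n => isClosed_le (by fun_prop) continuous_const

theorem isGδ_setOf_fst_eq_zero_imp_snd_eq_zero :
    IsGδ {z : ZSeq | ∀ k, ((z k).1 : ℝ) = 0 → ((z k).2 : ℝ) = 0} := by
  rw [Set.ofPred_forall]
  exact .iInter fun k => isGδ_setOf_imp (isClosed_eq (by fun_prop) continuous_const)
    (isClosed_eq (by fun_prop) continuous_const)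

/-- **`Z↓` is Polish.** Both `Z↓₀` and `Z↓` are `Gδ` subsets of the product space
`([0,1] × [0,∞))^ℕ`; consequently `Z↓` is a Polish space for the subspace topology. -/
theorem Zdown_Gdelta_polish : IsGδ Zdown0 ∧ IsGδ Zdown ∧ PolishSpace ↥Zdown := by
  have hZ0 : IsGδ Zdown0 := isGδ_setOf_lexAntitone.inter isClosed_setOf_sum_fst_le_one.isGδ
  have hZ : IsGδ Zdown := hZ0.inter isGδ_setOf_fst_eq_zero_imp_snd_eq_zero
  exact ⟨hZ0, hZ, hZ.polishSpace⟩
end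

section
/- For every θ ∈ ℝ there exists a constant C > 0 such that for every z = ((s_i, v_i))_{i≥1} ∈ Z↓: 1 + θ·(log v_1)·1_{|log v_1| ≤ 1} − Σ_{i≥1} v_i^θ ≤ C·((log v_1)² ∧ 1), where the left-hand side is interpreted as −∞ if the sum diverges. Consequently, for any measure Λ on Z↓ satisfying ∫_{Z↓} (1 − s_1·1_{v_1>0} + (log v_1)² ∧ 1) Λ(dz) < ∞, the negative part of the function z ↦ Σ_{i≥1} v_i^θ − 1 − θ·(log v_1)·1_{|log v_1| ≤ 1} is Λ-integrable. -/
open scoped ENNReal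

/-- `(log v)·1_{|log v| ≤ 1}`, interpreted as `0` when `v = 0`. -/
noncomputable def logT (v : ℝ) : ℝ := if |Real.log v| ≤ 1 then Real.log v else 0

/-- `(log v)² ∧ 1`, interpreted as `1` when `v = 0`. -/
noncomputable def sqLogMin1 (v : ℝ) : ℝ := if v = 0 then 1 else min ((Real.log v) ^ 2) 1

/-- The indicator `1_{v > 0}`. -/
noncomputable def ind01 (v : ℝ) : ℝ := if 0 < v then 1 else 0

/-- `v^θ` with the convention `0^θ = 0`, as an extended nonnegative real. -/
noncomputable def powE (v θ : ℝ) : ℝ≥0∞ := if v = 0 then 0 else ENNReal.ofReal (v ^ θ)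

/- Only the first atom matters. With `t = log v₁`, the tangent-line bound
`1 + θt ≤ e^{θt} = v₁^θ` handles `|t| ≤ 1`; for `|t| > 1` (or `v₁ = 0`) the truncated
logarithm vanishes while `(log v₁)² ∧ 1 = 1`. So `C = 1` works, and the second claim follows
since `(log v₁)² ∧ 1 ≤ 1 − s₁·1_{v₁>0} + (log v₁)² ∧ 1` on `Z↓`. -/

lemma sqLogMin1_nonneg (v : ℝ) : 0 ≤ sqLogMin1 v := by
  unfold sqLogMin1
  split_ifs
  · exact zero_le_one
  · exact le_min (sq_nonneg _) zero_le_one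

lemma mul_ind01_le_one {s : ℝ} (hs : s ≤ 1) (v : ℝ) : s * ind01 v ≤ 1 := by
  unfold ind01
  split_ifs <;> linarith

lemma one_add_mul_logT_le_sqLogMin1_add_rpow (θ : ℝ) {v : ℝ} (hv : 0 < v) :
    1 + θ * logT v ≤ sqLogMin1 v + v ^ θ := by
  rw [Real.rpow_def_of_pos hv]
  simp only [logT, sqLogMin1, if_neg hv.ne']
  have hexp := Real.exp_pos (Real.log v * θ)
  split_ifs with ht
  · have := Real.add_one_le_exp (Real.log v * θ)
    have := le_min (sq_nonneg (Real.log v)) zero_le_one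
    linarith
  · have h1 : 1 ≤ Real.log v ^ 2 := by
      nlinarith [sq_abs (Real.log v), not_le.mp ht]
    rw [min_eq_right h1]
    linarith

lemma ofReal_one_add_mul_logT_le_add_powE (θ : ℝ) {v : ℝ} (hv : 0 ≤ v) :
    ENNReal.ofReal (1 + θ * logT v) ≤ ENNReal.ofReal (sqLogMin1 v) + powE v θ := by
  rcases hv.eq_or_lt with rfl | hpos
  · simp [logT, sqLogMin1, powE]
  · rw [powE, if_neg hpos.ne', ← ENNReal.ofReal_add (sqLogMin1_nonneg v)
      (Real.rpow_nonneg hv θ)]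
    exact ENNReal.ofReal_le_ofReal (one_add_mul_logT_le_sqLogMin1_add_rpow θ hpos)

lemma MemZdown.ofReal_one_add_mul_logT_le_add_tsum {z : ℕ → ℝ × ℝ} (hz : MemZdown z)
    (θ : ℝ) :
    ENNReal.ofReal (1 + θ * logT (z 0).2) ≤
      ENNReal.ofReal (sqLogMin1 (z 0).2) + ∑' i : ℕ, powE (z i).2 θ :=
  (ofReal_one_add_mul_logT_le_add_powE θ (hz.1 0).2).trans
    (add_le_add_right (ENNReal.le_tsum 0) _)

lemma MemZdown.sqLogMin1_le {z : ℕ → ℝ × ℝ} (hz : MemZdown z) :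
    sqLogMin1 (z 0).2 ≤ 1 - (z 0).1 * ind01 (z 0).2 + sqLogMin1 (z 0).2 := by
  linarith [mul_ind01_le_one (hz.1 0).1.2 (z 0).2]

open MeasureTheory in
/-- **Integrability of the negative part of the cumulant integrand.** For every `θ ∈ ℝ`
there is `C > 0` with `1 + θ·(log v_1)·1_{|log v_1| ≤ 1} − Σ_i v_i^θ ≤ C·((log v_1)² ∧ 1)`
on `Z↓` (the left side being `−∞` when the sum diverges; this is expressed below in
`[0,∞]` by moving the sum to the right-hand side). Consequently, for any measure `Λ`
on `Z↓` with `∫ (1 − s_1·1_{v_1>0} + (log v_1)² ∧ 1) dΛ < ∞`, the negative part of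
`z ↦ Σ_i v_i^θ − 1 − θ·(log v_1)·1_{|log v_1| ≤ 1}` is `Λ`-integrable. -/
theorem cumulant_integrand_negative_part (θ : ℝ) :
    (∃ C : ℝ, 0 < C ∧ ∀ z : ℕ → ℝ × ℝ, MemZdown z →
      ENNReal.ofReal (1 + θ * logT (z 0).2) ≤
        ENNReal.ofReal (C * sqLogMin1 (z 0).2) + ∑' i : ℕ, powE (z i).2 θ) ∧
    (∀ Λ : Measure (ℕ → ℝ × ℝ), Λ {z | ¬ MemZdown z} = 0 →
      (∫⁻ z, ENNReal.ofReal (1 - (z 0).1 * ind01 (z 0).2 + sqLogMin1 (z 0).2) ∂Λ) ≠ ⊤ →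
      (∫⁻ z, (ENNReal.ofReal (1 + θ * logT (z 0).2) - ∑' i : ℕ, powE (z i).2 θ) ∂Λ) ≠ ⊤) := by
  refine ⟨⟨1, one_pos, fun z hz => by
    simpa using hz.ofReal_one_add_mul_logT_le_add_tsum θ⟩, ?_⟩
  intro Λ hΛ hfin
  refine ne_top_of_le_ne_top hfin (lintegral_mono_ae ?_)
  filter_upwards [ae_iff.mpr hΛ] with z hz
  exact (tsub_le_iff_right.mpr (hz.ofReal_one_add_mul_logT_le_add_tsum θ)).trans
    (ENNReal.ofReal_le_ofReal hz.sqLogMin1_le)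
end

section
/- Let Λ be a measure on Z↓ satisfying ∫_{Z↓} (1 − s_1·1_{v_1>0} + (log v_1)² ∧ 1) Λ(dz) < ∞. Then for every n ≥ 1: ∫_{Z↓} Σ_{i : v_i > 0} s_i^n · ((log v_i)² ∧ 1) Λ(dz) < ∞ and ∫_{Z↓} (1 − Σ_{i : v_i > 0} s_i^n) Λ(dz) < ∞. This rests on the pointwise bound, valid for every z ∈ Z↓ and n ≥ 1: Σ_{i : v_i > 0} s_i^n·((log v_i)² ∧ 1) + (1 − Σ_{i : v_i > 0} s_i^n) ≤ ((log v_1)² ∧ 1) + n·(1 − s_1·1_{v_1>0}). -/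
open scoped ENNReal

lemma sqLogMin1_le_one (v : ℝ) : sqLogMin1 v ≤ 1 := by
  unfold sqLogMin1; split
  · exact le_rfl
  · exact min_le_right _ _

lemma ind01_nonneg (v : ℝ) : 0 ≤ ind01 v := by unfold ind01; split <;> norm_num

lemma ind01_le_one (v : ℝ) : ind01 v ≤ 1 := by unfold ind01; split <;> norm_num

section Aux

variable {z : ℕ → ℝ × ℝ} {n : ℕ}

lemma summable_s (hz : MemZdown z) : Summable (fun i => (z i).1) :=
  summable_of_sum_range_le (fun i => (hz.1 i).1.1) hz.2.2.1

lemma B_nonneg (hz : MemZdown z) (i : ℕ) : 0 ≤ ind01 (z i).2 * (z i).1 ^ n :=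
  mul_nonneg (ind01_nonneg _) (pow_nonneg (hz.1 i).1.1 _)

lemma B_le_s (hz : MemZdown z) (hn : 1 ≤ n) (i : ℕ) : ind01 (z i).2 * (z i).1 ^ n ≤ (z i).1 := by
  have h1 : (z i).1 ^ n ≤ (z i).1 ^ 1 :=
    pow_le_pow_of_le_one (hz.1 i).1.1 (hz.1 i).1.2 hn
  have h2 : ind01 (z i).2 * (z i).1 ^ n ≤ 1 * (z i).1 ^ n :=
    mul_le_mul_of_nonneg_right (ind01_le_one _) (pow_nonneg (hz.1 i).1.1 _)
  simpa using h2.trans (by simpa using h1)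

lemma summable_B (hz : MemZdown z) (hn : 1 ≤ n) : Summable (fun i => ind01 (z i).2 * (z i).1 ^ n) :=
  Summable.of_nonneg_of_le (B_nonneg hz) (B_le_s hz hn) (summable_s hz)

lemma A_nonneg (hz : MemZdown z) (i : ℕ) : 0 ≤ ind01 (z i).2 * (z i).1 ^ n * sqLogMin1 (z i).2 :=
  mul_nonneg (B_nonneg hz i) (sqLogMin1_nonneg _)

lemma A_le_B (hz : MemZdown z) (i : ℕ) :
    ind01 (z i).2 * (z i).1 ^ n * sqLogMin1 (z i).2 ≤ ind01 (z i).2 * (z i).1 ^ n := by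
  have := mul_le_mul_of_nonneg_left (sqLogMin1_le_one (z i).2) (B_nonneg hz (n := n) i)
  simpa using this

lemma summable_A (hz : MemZdown z) (hn : 1 ≤ n) : Summable (fun i => ind01 (z i).2 * (z i).1 ^ n * sqLogMin1 (z i).2) :=
  Summable.of_nonneg_of_le (A_nonneg hz) (A_le_B hz) (summable_B hz hn)

lemma tsum_B_le_one (hz : MemZdown z) (hn : 1 ≤ n) : (∑' i, ind01 (z i).2 * (z i).1 ^ n) ≤ 1 :=
  le_trans (Summable.tsum_le_tsum (B_le_s hz hn) (summable_B hz hn) (summable_s hz))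
    (Summable.tsum_le_of_sum_range_le (summable_s hz) hz.2.2.1)

lemma pointwise_bound (hz : MemZdown z) (hn : 1 ≤ n) :
    (∑' i : ℕ, ind01 (z i).2 * (z i).1 ^ n * sqLogMin1 (z i).2) +
      (1 - ∑' i : ℕ, ind01 (z i).2 * (z i).1 ^ n) ≤
    sqLogMin1 (z 0).2 + n * (1 - (z 0).1 * ind01 (z 0).2) := by
  set A : ℕ → ℝ := fun i => ind01 (z i).2 * (z i).1 ^ n * sqLogMin1 (z i).2 with hA
  set B : ℕ → ℝ := fun i => ind01 (z i).2 * (z i).1 ^ n with hB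
  have hsumA : Summable A := summable_A hz hn
  have hsumB : Summable B := summable_B hz hn
  have hsumBA : Summable (fun i => B i - A i) := hsumB.sub hsumA
  have hle : B 0 - A 0 ≤ ∑' i, (B i - A i) :=
    Summable.le_tsum hsumBA 0 (fun j _ => sub_nonneg.mpr (A_le_B hz j))
  have htsub : (∑' i, (B i - A i)) = (∑' i, B i) - (∑' i, A i) := Summable.tsum_sub hsumB hsumA
  have key : (∑' i, A i) + (1 - ∑' i, B i) ≤ 1 + A 0 - B 0 := by
    rw [htsub] at hle; linarith
  refine key.trans ?_
  have hs0 : 0 ≤ (z 0).1 := (hz.1 0).1.1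
  have hs1 : (z 0).1 ≤ 1 := (hz.1 0).1.2
  have hn1 : (1 : ℝ) ≤ n := by exact_mod_cast hn
  by_cases hv : 0 < (z 0).2
  · have hi : ind01 (z 0).2 = 1 := if_pos hv
    have hq0 : 0 ≤ sqLogMin1 (z 0).2 := sqLogMin1_nonneg _
    have hq1 : sqLogMin1 (z 0).2 ≤ 1 := sqLogMin1_le_one _
    have hbern : 1 + (n : ℝ) * ((z 0).1 - 1) ≤ (z 0).1 ^ n := by
      have := one_add_mul_le_pow (a := (z 0).1 - 1) (by linarith) n
      simpa using this
    have hpow1 : (z 0).1 ^ n ≤ 1 := pow_le_one₀ hs0 hs1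
    have hpow0 : 0 ≤ (z 0).1 ^ n := pow_nonneg hs0 _
    simp only [hA, hB, hi, one_mul, mul_one]
    nlinarith [mul_le_mul_of_nonneg_right hpow1 hq0]
  · have hi : ind01 (z 0).2 = 0 := if_neg hv
    have hq0 : 0 ≤ sqLogMin1 (z 0).2 := sqLogMin1_nonneg _
    simp only [hA, hB, hi, zero_mul, mul_zero, sub_zero]
    nlinarith

end Aux

open MeasureTheory in
/-- **Finiteness of the level-`n` characteristics.** If `Λ` is a measure on `Z↓` with
`∫ (1 − s_1·1_{v_1>0} + (log v_1)² ∧ 1) dΛ < ∞`, then for every `n ≥ 1` both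
`∫ Σ_{i : v_i>0} s_i^n·((log v_i)² ∧ 1) dΛ` and `∫ (1 − Σ_{i : v_i>0} s_i^n) dΛ` are
finite; this rests on the pointwise bound
`Σ_{i : v_i>0} s_i^n·((log v_i)² ∧ 1) + (1 − Σ_{i : v_i>0} s_i^n)
  ≤ ((log v_1)² ∧ 1) + n·(1 − s_1·1_{v_1>0})`. -/
theorem level_n_characteristics_finite :
    (∀ z : ℕ → ℝ × ℝ, MemZdown z → ∀ n : ℕ, 1 ≤ n →
      (∑' i : ℕ, ind01 (z i).2 * (z i).1 ^ n * sqLogMin1 (z i).2) +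
        (1 - ∑' i : ℕ, ind01 (z i).2 * (z i).1 ^ n) ≤
      sqLogMin1 (z 0).2 + n * (1 - (z 0).1 * ind01 (z 0).2)) ∧
    (∀ Λ : Measure (ℕ → ℝ × ℝ), Λ {z | ¬ MemZdown z} = 0 →
      (∫⁻ z, ENNReal.ofReal (1 - (z 0).1 * ind01 (z 0).2 + sqLogMin1 (z 0).2) ∂Λ) ≠ ⊤ →
      ∀ n : ℕ, 1 ≤ n →
        (∫⁻ z, ENNReal.ofReal
            (∑' i : ℕ, ind01 (z i).2 * (z i).1 ^ n * sqLogMin1 (z i).2) ∂Λ) ≠ ⊤ ∧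
        (∫⁻ z, ENNReal.ofReal (1 - ∑' i : ℕ, ind01 (z i).2 * (z i).1 ^ n) ∂Λ) ≠ ⊤) := by
  constructor
  · exact fun z hz n hn => pointwise_bound hz hn
  · intro Λ hΛ hfin n hn
    have hae : ∀ᵐ z ∂Λ, MemZdown z := by
      rw [MeasureTheory.ae_iff]; exact hΛ
    -- common bound
    have hbound : ∀ (f : (ℕ → ℝ × ℝ) → ℝ),
        (∀ z, MemZdown z → 0 ≤ f z ∧ f z ≤ sqLogMin1 (z 0).2 + n * (1 - (z 0).1 * ind01 (z 0).2))
        → (∫⁻ z, ENNReal.ofReal (f z) ∂Λ) ≠ ⊤ := by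
      intro f hf
      have hmono : (∫⁻ z, ENNReal.ofReal (f z) ∂Λ) ≤
          ∫⁻ z, (n : ℝ≥0∞) * ENNReal.ofReal (1 - (z 0).1 * ind01 (z 0).2 + sqLogMin1 (z 0).2) ∂Λ := by
        refine lintegral_mono_ae (hae.mono fun z hz => ?_)
        have h1 := (hf z hz).2
        have hs0 : 0 ≤ (z 0).1 := (hz.1 0).1.1
        have hs1 : (z 0).1 ≤ 1 := (hz.1 0).1.2
        have hind0 : 0 ≤ ind01 (z 0).2 := ind01_nonneg _
        have hind1 : ind01 (z 0).2 ≤ 1 := ind01_le_one _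
        have hq0 : 0 ≤ sqLogMin1 (z 0).2 := sqLogMin1_nonneg _
        have hn1 : (1 : ℝ) ≤ n := by exact_mod_cast hn
        have h2 : f z ≤ (n : ℝ) * (1 - (z 0).1 * ind01 (z 0).2 + sqLogMin1 (z 0).2) := by
          have ht : (z 0).1 * ind01 (z 0).2 ≤ 1 :=
            mul_le_one₀ hs1 hind0 hind1
          nlinarith
        calc ENNReal.ofReal (f z) ≤
            ENNReal.ofReal ((n : ℝ) * (1 - (z 0).1 * ind01 (z 0).2 + sqLogMin1 (z 0).2)) :=
              ENNReal.ofReal_le_ofReal h2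
          _ = (n : ℝ≥0∞) * ENNReal.ofReal (1 - (z 0).1 * ind01 (z 0).2 + sqLogMin1 (z 0).2) := by
              rw [ENNReal.ofReal_mul (by positivity), ENNReal.ofReal_natCast]
      have := hmono.trans_eq (lintegral_const_mul' _ _ (by simp))
      exact ne_top_of_le_ne_top (ENNReal.mul_ne_top (by simp) hfin) (hmono.trans_eq
        (lintegral_const_mul' _ _ (by simp)))
    constructor
    · refine hbound _ (fun z hz => ?_)
      have h0 : 0 ≤ ∑' i : ℕ, ind01 (z i).2 * (z i).1 ^ n * sqLogMin1 (z i).2 :=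
        tsum_nonneg (A_nonneg hz)
      have hB1 : (∑' i, ind01 (z i).2 * (z i).1 ^ n) ≤ 1 := tsum_B_le_one hz hn
      have := pointwise_bound hz hn
      exact ⟨h0, by linarith⟩
    · refine hbound _ (fun z hz => ?_)
      have h0 : 0 ≤ ∑' i : ℕ, ind01 (z i).2 * (z i).1 ^ n * sqLogMin1 (z i).2 :=
        tsum_nonneg (A_nonneg hz)
      have hB1 : (∑' i, ind01 (z i).2 * (z i).1 ^ n) ≤ 1 := tsum_B_le_one hz hn
      have := pointwise_bound hz hn
      exact ⟨by linarith, by linarith⟩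
end

section
/- Let α ∈ ℝ, let x̄ = (x̄^{(k)})_{k≥1} be a sequence of càdlàg maps x̄^{(k)} = (π̄^{(k)}, v̄^{(k)}) : [0,∞) → M∞ with x̄^{(k)}(0) equal to the marked partition with single block ℕ and mark 1, and let x_n = (π_n, v_n) → x = (π, v) in M∞ be a convergent sequence such that v_{n,i} = 0 for all n whenever v_i = 0. If t ≥ 0 is such that x̄^{(k)}(v_{n,i}^α t) → x̄^{(k)}(v_i^α t) as n → ∞ for every k ≥ 1 and every i with v_i > 0, then Frag_α(x_n, x̄)(t) → Frag_α(x, x̄)(t) in M∞. -/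
/-- The space `S¹`: the interval `[0,∞)`, to be endowed with the circle-like topology
identifying `0` and `∞`. -/
def S1 : Type := {x : ℝ // 0 ≤ x}

/-- The real number represented by a point of `S¹`. -/
def S1.toReal (x : S1) : ℝ := Subtype.val x

theorem S1.nonneg (x : S1) : 0 ≤ x.toReal := Subtype.prop x

/-- The point `0` (identified with `∞`) of `S¹`. -/
def S1.zero : S1 := ⟨0, le_refl 0⟩

/-- The point `1` of `S¹`. -/
def S1.one : S1 := ⟨1, zero_le_one⟩

/-- The usual topology of `[0,∞)` (induced by that of `ℝ`) on the carrier of `S¹`. -/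
def S1.std : TopologicalSpace S1 := TopologicalSpace.induced S1.toReal inferInstance

open Topology in
/-- The topology of `S¹`, generated by (a) the usual open subsets of `(0,∞)` and (b) the
subsets of `[0,∞)` containing `0`, open in the usual topology of `[0,∞)`, and containing
a half-line `(A,∞)`. -/
instance S1.topology : TopologicalSpace S1 :=
  TopologicalSpace.generateFrom
    ({U : Set S1 | (∀ x ∈ U, 0 < x.toReal) ∧ IsOpen (S1.toReal '' U)} ∪
      {U : Set S1 | S1.zero ∈ U ∧ IsOpen[S1.std] U ∧
        ∃ A : ℝ, 0 < A ∧ ∀ x : S1, A < x.toReal → x ∈ U})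

/-- Multiplication on `S¹`, inherited from `[0,∞)`. -/
def S1.mul (a b : S1) : S1 := ⟨a.toReal * b.toReal, mul_nonneg a.nonneg b.nonneg⟩

/-- The predicate defining marked partitions inside `(ℕ → ℕ → Bool) × (ℕ → S¹)`. -/
def IsMP (p : (ℕ → ℕ → Bool) × (ℕ → S1)) : Prop :=
  (∀ i, p.1 i i = true) ∧ (∀ i j, p.1 i j = p.1 j i) ∧
    (∀ i j k, p.1 i j = true → p.1 j k = true → p.1 i k = true) ∧
    (∀ i j, p.1 i j = true → p.2 i = p.2 j)

/-- The space `M∞` of marked partitions of `ℕ` with marks in `S¹`. -/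
def MP : Type := {p : (ℕ → ℕ → Bool) × (ℕ → S1) // IsMP p}

/-- `M∞` carries the topology induced from the product topology on `P∞ × (S¹)^ℕ`. -/
instance : TopologicalSpace MP := by unfold MP; infer_instance

/-- The relation of a marked partition. -/
def MP.rel (x : MP) (i j : ℕ) : Bool := (Subtype.val x).1 i j

/-- The mark of (the block containing) `i`. -/
def MP.mark (x : MP) (i : ℕ) : S1 := (Subtype.val x).2 i

theorem MP.rel_refl (x : MP) (i : ℕ) : x.rel i i = true := (Subtype.prop x).1 i

theorem MP.rel_symm (x : MP) (i j : ℕ) : x.rel i j = x.rel j i := (Subtype.prop x).2.1 i j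

theorem MP.rel_trans (x : MP) {i j k : ℕ} (h : x.rel i j = true) (h' : x.rel j k = true) :
    x.rel i k = true := (Subtype.prop x).2.2.1 i j k h h'

theorem MP.mark_congr (x : MP) {i j : ℕ} (h : x.rel i j = true) : x.mark i = x.mark j :=
  (Subtype.prop x).2.2.2 i j h

theorem MP.block_eq (x : MP) {i j : ℕ} (h : x.rel i j = true) :
    {m | x.rel i m = true} = {m | x.rel j m = true} := by
  ext m
  simp only [Set.mem_setOf_eq]
  constructor
  · intro hm
    have hji : x.rel j i = true := by rw [← x.rel_symm i j]; exact h
    exact x.rel_trans hji hm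
  · intro hm
    exact x.rel_trans h hm

/-- Least element of the block containing `i`. -/
noncomputable def MP.leastOf (x : MP) (i : ℕ) : ℕ := sInf {m | x.rel i m = true}

open Classical in
/-- Label of the block containing `i` (blocks are labelled in increasing order of their
least elements; labels start at `1`). -/
noncomputable def MP.label (x : MP) (i : ℕ) : ℕ :=
  ((Finset.range (x.leastOf i + 1)).filter (fun m => x.leastOf m = m)).card

theorem MP.leastOf_congr (x : MP) {i j : ℕ} (h : x.rel i j = true) :
    x.leastOf i = x.leastOf j := by
  unfold MP.leastOf
  rw [x.block_eq h]

theorem MP.label_congr (x : MP) {i j : ℕ} (h : x.rel i j = true) :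
    x.label i = x.label j := by
  unfold MP.label
  rw [x.leastOf_congr h]

/-- `v^α` with the convention `0^α = 0` for every `α ∈ ℝ`. -/
noncomputable def rpow0 (v α : ℝ) : ℝ := if v = 0 then 0 else v ^ α

/-- The time `v_i^α t` at which the fragmentation of the block of `i` is evaluated. -/
noncomputable def timeOf (x : MP) (i : ℕ) (α t : ℝ) : ℝ := rpow0 (x.mark i).toReal α * t

theorem timeOf_congr (x : MP) {i j : ℕ} (h : x.rel i j = true) (α t : ℝ) :
    timeOf x i α t = timeOf x j α t := by
  unfold timeOf
  rw [x.mark_congr h]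

/-- The pair underlying `Frag_α(x, x̄)(t)`. -/
noncomputable def fragPre (α : ℝ) (x : MP) (xb : ℕ → ℝ → MP) (t : ℝ) :
    (ℕ → ℕ → Bool) × (ℕ → S1) :=
  (fun i j => x.rel i j && (xb (x.label i) (timeOf x i α t)).rel i j,
    fun i => S1.mul (x.mark i) ((xb (x.label i) (timeOf x i α t)).mark i))

theorem fragPre_isMP (α : ℝ) (x : MP) (xb : ℕ → ℝ → MP) (t : ℝ) :
    IsMP (fragPre α x xb t) := by
  refine ⟨fun i => ?_, fun i j => ?_, fun i j k h1 h2 => ?_, fun i j h => ?_⟩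
  · simp [fragPre, MP.rel_refl]
  · by_cases h : x.rel i j = true
    · have hji : x.rel j i = true := by rw [← x.rel_symm i j]; exact h
      have hl := x.label_congr h
      have hT := timeOf_congr x h α t
      simp only [fragPre, h, hji, Bool.true_and, hl, hT]
      exact (xb (x.label j) (timeOf x j α t)).rel_symm i j
    · have h1 : x.rel i j = false := Bool.eq_false_iff.mpr h
      have h2 : x.rel j i = false := by rw [← x.rel_symm i j]; exact h1
      simp [fragPre, h1, h2]
  · simp only [fragPre, Bool.and_eq_true] at h1 h2 ⊢
    obtain ⟨hij, hij'⟩ := h1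
    obtain ⟨hjk, hjk'⟩ := h2
    refine ⟨x.rel_trans hij hjk, ?_⟩
    have hl := x.label_congr hij
    have hT := timeOf_congr x hij α t
    rw [hl, hT] at hij' ⊢
    exact (xb (x.label j) (timeOf x j α t)).rel_trans hij' hjk'
  · simp only [fragPre, Bool.and_eq_true] at h
    obtain ⟨hij, hij'⟩ := h
    simp only [fragPre]
    rw [x.mark_congr hij, x.label_congr hij, timeOf_congr x hij α t,
      (xb (x.label j) (timeOf x j α t)).mark_congr
        (by rwa [x.label_congr hij, timeOf_congr x hij α t] at hij')]

/-- The self-similar fragmentation operator `Frag_α`. -/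
noncomputable def frag (α : ℝ) (x : MP) (xb : ℕ → ℝ → MP) (t : ℝ) : MP :=
  ⟨fragPre α x xb t, fragPre_isMP α x xb t⟩

open Topology Filter

/-- Càdlàg on `[0,∞)`: right-continuous with left limits. -/
def Cadlag (f : ℝ → MP) : Prop :=
  (∀ t : ℝ, 0 ≤ t → ContinuousWithinAt f (Set.Ici t) t) ∧
    (∀ t : ℝ, 0 < t → ∃ l : MP, Tendsto f (nhdsWithin t (Set.Iio t)) (𝓝 l))

/-- The marked partition `(1, 1)`: a single block `ℕ` with mark `1`. -/
def oneMP : MP :=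
  ⟨(fun _ _ => true, fun _ => S1.one),
    ⟨fun _ => rfl, fun _ _ => rfl, fun _ _ _ _ _ => rfl, fun _ _ _ => rfl⟩⟩

section AuxLemmas

open Topology Filter TopologicalSpace Set

/-- The generating set of the topology of `S¹`. -/
def S1gen : Set (Set S1) :=
  {U : Set S1 | (∀ x ∈ U, 0 < x.toReal) ∧ IsOpen (S1.toReal '' U)} ∪
    {U : Set S1 | S1.zero ∈ U ∧ IsOpen[S1.std] U ∧
      ∃ A : ℝ, 0 < A ∧ ∀ x : S1, A < x.toReal → x ∈ U}

lemma S1.tendsto_nhds_iff {ι : Type*} {l : Filter ι} {y : ι → S1} {z : S1} :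
    Tendsto y l (𝓝 z) ↔ ∀ s ∈ S1gen, z ∈ s → y ⁻¹' s ∈ l := by
  rw [show (𝓝 z) = @nhds S1 (TopologicalSpace.generateFrom S1gen) z from rfl]
  exact tendsto_nhds_generateFrom_iff

lemma S1.mem_nhds_of_gen {U : Set S1} {z : S1} (hU : U ∈ S1gen) (hz : z ∈ U) : U ∈ 𝓝 z := by
  have := (S1.tendsto_nhds_iff (y := (id : S1 → S1)) (l := 𝓝 z)).mp tendsto_id U hU hz
  simpa using this

lemma S1.toReal_mul (a b : S1) : (S1.mul a b).toReal = a.toReal * b.toReal := rfl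

/-- Convergence in the usual topology of `[0,∞)` implies convergence in `S¹`. -/
lemma S1.tendsto_of_toReal {ι : Type*} {l : Filter ι} {y : ι → S1} {z : S1}
    (h : Tendsto (fun n => (y n).toReal) l (𝓝 z.toReal)) : Tendsto y l (𝓝 z) := by
  rw [S1.tendsto_nhds_iff]
  rintro s (⟨hpos, hopen⟩ | ⟨h0, hstd, A, hA, hhalf⟩) hz
  · have hzim : z.toReal ∈ S1.toReal '' s := ⟨z, hz, rfl⟩
    have hev := h (hopen.mem_nhds hzim)
    refine mem_of_superset hev ?_
    intro n hn
    obtain ⟨w, hw, hwn⟩ := hn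
    have hwe : w = y n := Subtype.ext hwn
    rwa [hwe] at hw
  · obtain ⟨V, hVopen, hVeq⟩ := isOpen_induced_iff.mp hstd
    have hzV : z.toReal ∈ V := by
      rw [← hVeq] at hz; exact hz
    have hev := h (hVopen.mem_nhds hzV)
    refine mem_of_superset hev ?_
    intro n hn
    rw [← hVeq]; exact hn

/-- Necessity of real convergence at a positive point of `S¹`. -/
lemma S1.toReal_tendsto_of_pos {ι : Type*} {l : Filter ι} {y : ι → S1} {z : S1}
    (hz : 0 < z.toReal) (h : Tendsto y l (𝓝 z)) :
    Tendsto (fun n => (y n).toReal) l (𝓝 z.toReal) := by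
  rw [Metric.tendsto_nhds]
  intro ε hε
  set ε' := min ε z.toReal with hε'def
  have hε'pos : 0 < ε' := lt_min hε hz
  have hε'le : ε' ≤ z.toReal := min_le_right _ _
  have hε'le' : ε' ≤ ε := min_le_left _ _
  set U : Set S1 := {w | z.toReal - ε' < w.toReal ∧ w.toReal < z.toReal + ε'} with hUdef
  have hUgen : U ∈ S1gen := by
    left
    constructor
    · intro w hw
      have h1 : z.toReal - ε' < w.toReal := hw.1
      linarith
    · have himg : S1.toReal '' U = Set.Ioo (z.toReal - ε') (z.toReal + ε') := by
        ext r
        constructor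
        · rintro ⟨w, hw, rfl⟩; exact ⟨hw.1, hw.2⟩
        · intro hr
          have hr0 : 0 ≤ r := le_of_lt (lt_of_le_of_lt (by linarith) hr.1)
          exact ⟨⟨r, hr0⟩, ⟨hr.1, hr.2⟩, rfl⟩
      rw [himg]; exact isOpen_Ioo
  have hzU : z ∈ U := ⟨by linarith, by linarith⟩
  have hev := h (S1.mem_nhds_of_gen hUgen hzU)
  refine mem_of_superset hev ?_
  intro n hn
  have h1 : z.toReal - ε' < (y n).toReal := hn.1
  have h2 : (y n).toReal < z.toReal + ε' := hn.2
  simp only [Set.mem_setOf_eq, Real.dist_eq, abs_lt]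
  constructor <;> linarith

/-- Necessity at the point `0 = ∞` of `S¹`. -/
lemma S1.small_or_large_of_tendsto_zero {ι : Type*} {l : Filter ι} {y : ι → S1} {z : S1}
    (hz : z.toReal = 0) (h : Tendsto y l (𝓝 z)) {ε A : ℝ} (hε : 0 < ε) (hA : 0 < A) :
    ∀ᶠ n in l, (y n).toReal < ε ∨ A < (y n).toReal := by
  set U : Set S1 := {w | w.toReal < ε ∨ A < w.toReal} with hUdef
  have hUgen : U ∈ S1gen := by
    right
    refine ⟨Or.inl hε, ?_, A, hA, fun w hw => Or.inr hw⟩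
    exact isOpen_induced_iff.mpr ⟨Set.Iio ε ∪ Set.Ioi A, isOpen_Iio.union isOpen_Ioi, rfl⟩
  have hzU : z ∈ U := Or.inl (by rw [hz]; exact hε)
  exact h (S1.mem_nhds_of_gen hUgen hzU)

/-- Sufficiency at the point `0 = ∞` of `S¹`. -/
lemma S1.tendsto_zero_of {ι : Type*} {l : Filter ι} {y : ι → S1} {z : S1} (hz : z.toReal = 0)
    (h : ∀ ε A : ℝ, 0 < ε → 0 < A → ∀ᶠ n in l, (y n).toReal < ε ∨ A < (y n).toReal) :
    Tendsto y l (𝓝 z) := by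
  rw [S1.tendsto_nhds_iff]
  rintro s (⟨hpos, _⟩ | ⟨h0, hstd, A, hA, hhalf⟩) hzs
  · exact absurd (hpos z hzs) (by rw [hz]; exact lt_irrefl 0)
  · obtain ⟨V, hVopen, hVeq⟩ := isOpen_induced_iff.mp hstd
    have hzV : z.toReal ∈ V := by rw [← hVeq] at hzs; exact hzs
    obtain ⟨ε, hε, hball⟩ := Metric.isOpen_iff.mp hVopen _ hzV
    filter_upwards [h ε A hε hA] with n hn
    rcases hn with hsmall | hlarge
    · rw [← hVeq]
      apply hball
      rw [Metric.mem_ball, Real.dist_eq, hz, sub_zero, abs_of_nonneg (y n).nonneg]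
      exact hsmall
    · exact hhalf _ hlarge

/-- Convergence of products in `S¹` when the first factor has positive limit. -/
lemma S1.tendsto_mul {ι : Type*} {l : Filter ι} {a b : ι → S1} {A B : S1}
    (hApos : 0 < A.toReal)
    (ha : Tendsto (fun n => (a n).toReal) l (𝓝 A.toReal))
    (hb : Tendsto b l (𝓝 B)) :
    Tendsto (fun n => S1.mul (a n) (b n)) l (𝓝 (S1.mul A B)) := by
  rcases lt_or_eq_of_le B.nonneg with hB | hB
  · apply S1.tendsto_of_toReal
    simpa only [S1.toReal_mul] using ha.mul (S1.toReal_tendsto_of_pos hB hb)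
  · apply S1.tendsto_zero_of (by rw [S1.toReal_mul, ← hB, mul_zero])
    intro ε Abd hε hAbd
    have hsmall : ∀ᶠ n in l, |(a n).toReal - A.toReal| < A.toReal / 2 := by
      have := Metric.tendsto_nhds.mp ha (A.toReal / 2) (by positivity)
      simpa [Real.dist_eq] using this
    have hb2 := S1.small_or_large_of_tendsto_zero hB.symm hb
      (ε := ε / (2 * A.toReal)) (A := 2 * Abd / A.toReal) (by positivity) (by positivity)
    filter_upwards [hsmall, hb2] with n h1 h2
    rw [abs_lt] at h1
    have ha1 : (a n).toReal < 2 * A.toReal := by linarith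
    have ha2 : A.toReal / 2 < (a n).toReal := by linarith
    have hbn0 : 0 ≤ (b n).toReal := (b n).nonneg
    rcases h2 with h2 | h2
    · left
      rw [S1.toReal_mul]
      calc (a n).toReal * (b n).toReal ≤ 2 * A.toReal * (b n).toReal := by nlinarith
        _ < 2 * A.toReal * (ε / (2 * A.toReal)) := by
            apply mul_lt_mul_of_pos_left h2 (by positivity)
        _ = ε := by field_simp
    · right
      rw [S1.toReal_mul]
      calc Abd = (A.toReal / 2) * (2 * Abd / A.toReal) := by field_simp
        _ < (a n).toReal * (2 * Abd / A.toReal) := by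
            apply mul_lt_mul_of_pos_right ha2 (by positivity)
        _ < (a n).toReal * (b n).toReal := by
            apply mul_lt_mul_of_pos_left h2 (by linarith)

/-- Characterization of convergence in `M∞`. -/
lemma MP.tendsto_iff {ι : Type*} {l : Filter ι} {f : ι → MP} {x : MP} :
    Tendsto f l (𝓝 x) ↔
      (∀ i j, ∀ᶠ n in l, (f n).rel i j = x.rel i j) ∧
        (∀ i, Tendsto (fun n => (f n).mark i) l (𝓝 (x.mark i))) := by
  constructor
  · intro h
    have hv : Tendsto (fun n => (f n).1) l (𝓝 x.1) := tendsto_subtype_rng.mp h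
    constructor
    · intro i j
      have hc : Continuous (fun p : (ℕ → ℕ → Bool) × (ℕ → S1) => p.1 i j) :=
        (continuous_apply j).comp ((continuous_apply i).comp continuous_fst)
      have h1 : Tendsto (fun n => (f n).rel i j) l (𝓝 (x.rel i j)) :=
        (hc.tendsto x.1).comp hv
      rw [nhds_discrete, tendsto_pure] at h1
      exact h1
    · intro i
      have hc : Continuous (fun p : (ℕ → ℕ → Bool) × (ℕ → S1) => p.2 i) :=
        (continuous_apply i).comp continuous_snd
      exact (hc.tendsto x.1).comp hv
  · rintro ⟨hrel, hmark⟩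
    apply tendsto_subtype_rng.mpr
    have h1 : Tendsto (fun n => (f n).1.1) l (𝓝 x.1.1) := by
      rw [tendsto_pi_nhds]
      intro i
      rw [tendsto_pi_nhds]
      intro j
      rw [nhds_discrete, tendsto_pure]
      exact hrel i j
    have h2 : Tendsto (fun n => (f n).1.2) l (𝓝 x.1.2) := by
      rw [tendsto_pi_nhds]
      exact hmark
    exact h1.prodMk_nhds h2

lemma sInf_eq_of_agree {A B : Set ℕ} {i : ℕ} (hiA : i ∈ A) (hiB : i ∈ B)
    (h : ∀ m ≤ i, (m ∈ A ↔ m ∈ B)) : sInf A = sInf B := by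
  have hA := Nat.sInf_mem (⟨i, hiA⟩ : A.Nonempty)
  have hB := Nat.sInf_mem (⟨i, hiB⟩ : B.Nonempty)
  have hAle : sInf A ≤ i := Nat.sInf_le hiA
  have hBle : sInf B ≤ i := Nat.sInf_le hiB
  exact le_antisymm (Nat.sInf_le ((h _ hBle).mpr hB)) (Nat.sInf_le ((h _ hAle).mp hA))

lemma MP.label_eq_of_agree {y x : MP} {i : ℕ}
    (h : ∀ a ≤ i, ∀ b ≤ i, y.rel a b = x.rel a b) : y.label i = x.label i := by
  have hleast : ∀ m ≤ i, y.leastOf m = x.leastOf m := by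
    intro m hm
    unfold MP.leastOf
    apply sInf_eq_of_agree (y.rel_refl m) (x.rel_refl m)
    intro m' hm'
    simp only [Set.mem_setOf_eq]
    rw [h m hm m' (hm'.trans hm)]
  have hLle : x.leastOf i ≤ i := Nat.sInf_le (x.rel_refl i)
  unfold MP.label
  rw [hleast i le_rfl]
  congr 1
  apply Finset.filter_congr
  intro m hm
  simp only [Finset.mem_range] at hm
  have hmi : m ≤ i := le_trans (Nat.lt_succ_iff.mp hm) hLle
  rw [hleast m hmi]

lemma eventually_label_eq {ι : Type*} {l : Filter ι} {f : ι → MP} {x : MP}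
    (hrel : ∀ i j, ∀ᶠ n in l, (f n).rel i j = x.rel i j) (i : ℕ) :
    ∀ᶠ n in l, (f n).label i = x.label i := by
  have hall : ∀ᶠ n in l, ∀ a ∈ Finset.range (i + 1), ∀ b ∈ Finset.range (i + 1),
      (f n).rel a b = x.rel a b := by
    rw [eventually_all_finset]
    intro a _
    rw [eventually_all_finset]
    intro b _
    exact hrel a b
  filter_upwards [hall] with n hn
  exact MP.label_eq_of_agree fun a ha b hb =>
    hn a (Finset.mem_range.mpr (Nat.lt_succ_of_le ha)) b
      (Finset.mem_range.mpr (Nat.lt_succ_of_le hb))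

end AuxLemmas

/-- **Continuity property of the operator `Frag_α`.** If `x_n → x` in `M∞`, marks of
`x_n` vanish wherever the marks of `x` do, and `x̄^{(k)}(v_{n,i}^α t) → x̄^{(k)}(v_i^α t)`
for all `k` and all `i` with `v_i > 0`, then `Frag_α(x_n, x̄)(t) → Frag_α(x, x̄)(t)`. -/
theorem frag_continuity (α : ℝ) (xb : ℕ → ℝ → MP)
    (hcad : ∀ k, Cadlag (xb k)) (hzero : ∀ k, xb k 0 = oneMP)
    (xs : ℕ → MP) (x : MP) (hconv : Tendsto xs atTop (𝓝 x))
    (hmarks : ∀ n i, (x.mark i).toReal = 0 → ((xs n).mark i).toReal = 0)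
    (t : ℝ) (ht : 0 ≤ t)
    (hxb : ∀ k i, 0 < (x.mark i).toReal →
      Tendsto (fun n => xb k (rpow0 ((xs n).mark i).toReal α * t)) atTop
        (𝓝 (xb k (rpow0 (x.mark i).toReal α * t)))) :
    Tendsto (fun n => frag α (xs n) xb t) atTop (𝓝 (frag α x xb t)) := by
  rw [MP.tendsto_iff] at hconv ⊢
  obtain ⟨hrel, hmark⟩ := hconv
  have hlab : ∀ i, ∀ᶠ n in atTop, (xs n).label i = x.label i := eventually_label_eq hrel
  constructor
  · intro i j
    rcases lt_or_eq_of_le (x.mark i).nonneg with hpos | hm0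
    · -- positive mark
      have hxbi := (MP.tendsto_iff.mp (hxb (x.label i) i hpos)).1 i j
      filter_upwards [hrel i j, hlab i, hxbi] with n h1 h2 h3
      show ((xs n).rel i j && (xb ((xs n).label i) (timeOf (xs n) i α t)).rel i j)
          = (x.rel i j && (xb (x.label i) (timeOf x i α t)).rel i j)
      rw [h1, h2]
      unfold timeOf
      rw [h3]
    · -- zero mark
      have hm0' : (x.mark i).toReal = 0 := hm0.symm
      filter_upwards [hrel i j] with n h1
      show ((xs n).rel i j && (xb ((xs n).label i) (timeOf (xs n) i α t)).rel i j)
          = (x.rel i j && (xb (x.label i) (timeOf x i α t)).rel i j)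
      have ht1 : timeOf (xs n) i α t = 0 := by
        unfold timeOf rpow0
        rw [hmarks n i hm0']
        simp
      have ht2 : timeOf x i α t = 0 := by
        unfold timeOf rpow0
        rw [hm0']
        simp
      rw [ht1, ht2, hzero, hzero, h1]
  · intro i
    rcases lt_or_eq_of_le (x.mark i).nonneg with hpos | hm0
    · -- positive mark
      have ha : Tendsto (fun n => ((xs n).mark i).toReal) atTop (𝓝 (x.mark i).toReal) :=
        S1.toReal_tendsto_of_pos hpos (hmark i)
      have hxbi := (MP.tendsto_iff.mp (hxb (x.label i) i hpos)).2 i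
      have hmain : Tendsto
          (fun n => S1.mul ((xs n).mark i)
            ((xb (x.label i) (rpow0 ((xs n).mark i).toReal α * t)).mark i)) atTop
          (𝓝 (S1.mul (x.mark i)
            ((xb (x.label i) (rpow0 (x.mark i).toReal α * t)).mark i))) :=
        S1.tendsto_mul hpos ha hxbi
      have heq : ∀ᶠ n in atTop,
          S1.mul ((xs n).mark i)
            ((xb (x.label i) (rpow0 ((xs n).mark i).toReal α * t)).mark i)
          = (frag α (xs n) xb t).mark i := by
        filter_upwards [hlab i] with n h2
        show _ = S1.mul ((xs n).mark i)
          ((xb ((xs n).label i) (timeOf (xs n) i α t)).mark i)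
        rw [h2]
        rfl
      exact (hmain.congr' heq)
    · -- zero mark
      have hm0' : (x.mark i).toReal = 0 := hm0.symm
      have hconst : ∀ n, (frag α (xs n) xb t).mark i = (frag α x xb t).mark i := by
        intro n
        apply Subtype.ext
        show ((xs n).mark i).toReal * _ = (x.mark i).toReal * _
        rw [hmarks n i hm0', hm0', zero_mul, zero_mul]
      exact Tendsto.congr (fun n => (hconst n).symm) tendsto_const_nhds
end
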